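/- Let 2 ≤ d ≤ n−1. Then 2d−2 < q(B_{n,d}) ≤ (3d−3+sqrt((d−1)^2+8))/2. -/

import Mathlib

open Matrix

namespace SignlessDigraph

variable {n : ℕ}

/-- Real adjacency matrix of a (multi)digraph on `Fin n`, given by arc multiplicities. -/
def adjMat (W : Fin n → Fin n → ℕ) : Matrix (Fin n) (Fin n) ℝ :=
  fun i j => (W i j : ℝ)

/-- Outdegree of a vertex. -/
def outdeg (W : Fin n → Fin n → ℕ) (i : Fin n) : ℕ := ∑ j, W i j

/-- Indegree of a vertex. -/
def indeg (W : Fin n → Fin n → ℕ) (i : Fin n) : ℕ := ∑ j, W j i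

/-- The signless Laplacian matrix `Q(D) = diag(outdegrees) + A(D)`. -/
noncomputable def Qmat (W : Fin n → Fin n → ℕ) : Matrix (Fin n) (Fin n) ℝ :=
  Matrix.diagonal (fun i => (outdeg W i : ℝ)) + adjMat W

/-- Spectral radius of a real matrix: the maximum modulus of its (complex) eigenvalues. -/
noncomputable def radius (M : Matrix (Fin n) (Fin n) ℝ) : ℝ :=
  sSup {r : ℝ | ∃ μ ∈ spectrum ℂ (M.map ((↑) : ℝ → ℂ)), r = ‖μ‖}

/-- The signless Laplacian spectral radius `q(D)`. -/
noncomputable def q (W : Fin n → Fin n → ℕ) : ℝ := radius (Qmat W)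

/-- The (adjacency) spectral radius `ρ(D)`. -/
noncomputable def rho (W : Fin n → Fin n → ℕ) : ℝ := radius (adjMat W)

/-- A digraph is simple: no loops and no multiple arcs. -/
def Simple (W : Fin n → Fin n → ℕ) : Prop :=
  (∀ i, W i i = 0) ∧ ∀ i j, W i j ≤ 1

/-- Strong connectivity: every vertex is reachable from every vertex by a directed path. -/
def StronglyConnected (W : Fin n → Fin n → ℕ) : Prop :=
  ∀ i j : Fin n, Relation.ReflTransGen (fun a b => W a b ≠ 0) i j

/-- Isomorphism of digraphs on `Fin n`. -/
def Iso (W W' : Fin n → Fin n → ℕ) : Prop :=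
  ∃ e : Fin n ≃ Fin n, ∀ i j, W (e i) (e j) = W' i j

/-- The clique number: maximum size of a set of vertices with all arcs in both directions. -/
noncomputable def cliqueNum (W : Fin n → Fin n → ℕ) : ℕ :=
  sSup {d : ℕ | ∃ s : Finset (Fin n), s.card = d ∧ ∀ i ∈ s, ∀ j ∈ s, i ≠ j → W i j ≠ 0}

/-- `W` has a directed cycle of length `c`. -/
def HasCycleLen (W : Fin n → Fin n → ℕ) (c : ℕ) : Prop :=
  ∃ (hc : 2 ≤ c) (p : Fin c → Fin n), Function.Injective p ∧
    ∀ i : Fin c, W (p i) (p ⟨((i : ℕ) + 1) % c, Nat.mod_lt _ (by omega)⟩) ≠ 0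

/-- The girth: length of a shortest directed cycle. -/
noncomputable def girth (W : Fin n → Fin n → ℕ) : ℕ := sInf {c | HasCycleLen W c}

/-- The complete digraph `K_n^↔`. -/
def Kcomp (n : ℕ) : Fin n → Fin n → ℕ := fun i j => if i = j then 0 else 1

/-- The directed cycle `C_n^→`, with arcs `i → i+1 (mod n)`. -/
def cyc (n : ℕ) : Fin n → Fin n → ℕ := fun i j => if (j : ℕ) = ((i : ℕ) + 1) % n then 1 else 0

/-- The digraph `B_{n,d}` (for `2 ≤ d ≤ n-1`): a complete digraph on the vertices
`0, …, d-1` together with a directed path `0 → d → d+1 → ⋯ → n-1 → 1`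
(the path `u_1 u_2 ⋯ u_{n-d+2}` with `u_1 = 0`, `u_{n-d+2} = 1`,
and internal vertices `d, …, n-1`). -/
def B (n d : ℕ) : Fin n → Fin n → ℕ := fun i j =>
  if i ≠ j ∧ (i : ℕ) < d ∧ (j : ℕ) < d then 1
  else if (i : ℕ) = 0 ∧ (j : ℕ) = d then 1
  else if d ≤ (i : ℕ) ∧ (j : ℕ) = (i : ℕ) + 1 then 1
  else if (i : ℕ) = n - 1 ∧ (j : ℕ) = 1 then 1
  else 0

/-- `B'_{n,d} = B_{n,d} − (u_{n-d+1}, u_{n-d+2}) + (u_{n-d+1}, u_1)`, i.e. the arc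
`n-1 → 1` is replaced by the arc `n-1 → 0`. -/
def B' (n d : ℕ) : Fin n → Fin n → ℕ := fun i j =>
  if (i : ℕ) = n - 1 ∧ (j : ℕ) = 1 then 0
  else if (i : ℕ) = n - 1 ∧ (j : ℕ) = 0 then 1
  else B n d i j

/-- The digraph `C_{n,g}` (for `2 ≤ g ≤ n-1`): vertices `u_1, …, u_n` are `0, …, n-1`,
with arcs `i → i+1` for `0 ≤ i ≤ n-2` together with the arcs `g-1 → 0` and `n-1 → 0`. -/
def Cng (n g : ℕ) : Fin n → Fin n → ℕ := fun i j =>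
  if (j : ℕ) = (i : ℕ) + 1 then 1
  else if ((i : ℕ) = g - 1 ∨ (i : ℕ) = n - 1) ∧ (j : ℕ) = 0 then 1
  else 0

/-- `C'_{n,g} = C_{n,g} − (u_n, u_1) + (u_n, u_g)`, i.e. the arc `n-1 → 0` is replaced by
the arc `n-1 → g-1`. -/
def Cng' (n g : ℕ) : Fin n → Fin n → ℕ := fun i j =>
  if (i : ℕ) = n - 1 ∧ (j : ℕ) = 0 then 0
  else if (i : ℕ) = n - 1 ∧ (j : ℕ) = g - 1 then 1
  else Cng n g i j

/-- The θ-digraph `θ(a,b,c)` realized on `Fin n` (intended for `n = a + b + c + 2`):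
vertex `0` is the common initial vertex of the paths `P_{a+2}`, `P_{b+2}` and terminal
vertex of `P_{c+2}`; vertex `1` is the common terminal vertex of `P_{a+2}`, `P_{b+2}`
and initial vertex of `P_{c+2}`; the internal vertices of the three paths are
`2, …, a+1`, `a+2, …, a+b+1` and `a+b+2, …, a+b+c+1` respectively. -/
def theta (n a b c : ℕ) : Fin n → Fin n → ℕ := fun i j =>
  if ((a = 0 ∧ (i : ℕ) = 0 ∧ (j : ℕ) = 1) ∨
      (a ≠ 0 ∧ (((i : ℕ) = 0 ∧ (j : ℕ) = 2) ∨
        (2 ≤ (i : ℕ) ∧ (i : ℕ) ≤ a ∧ (j : ℕ) = (i : ℕ) + 1) ∨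
        ((i : ℕ) = a + 1 ∧ (j : ℕ) = 1))) ∨
      (b = 0 ∧ (i : ℕ) = 0 ∧ (j : ℕ) = 1) ∨
      (b ≠ 0 ∧ (((i : ℕ) = 0 ∧ (j : ℕ) = a + 2) ∨
        (a + 2 ≤ (i : ℕ) ∧ (i : ℕ) ≤ a + b ∧ (j : ℕ) = (i : ℕ) + 1) ∨
        ((i : ℕ) = a + b + 1 ∧ (j : ℕ) = 1))) ∨
      (c = 0 ∧ (i : ℕ) = 1 ∧ (j : ℕ) = 0) ∨
      (c ≠ 0 ∧ (((i : ℕ) = 1 ∧ (j : ℕ) = a + b + 2) ∨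
        (a + b + 2 ≤ (i : ℕ) ∧ (i : ℕ) ≤ a + b + c ∧ (j : ℕ) = (i : ℕ) + 1) ∨
        ((i : ℕ) = a + b + c + 1 ∧ (j : ℕ) = 0))))
  then 1 else 0

/-- The digraph `K→(n,k,m)`: the vertex set is partitioned into
`V₁ = {0,…,m-1}`, `S = {m,…,m+k-1}`, `V₂ = {m+k,…,n-1}`; it is the complete digraph
with all arcs from `V₂` to `V₁` removed. -/
def Kdir (n k m : ℕ) : Fin n → Fin n → ℕ := fun i j =>
  if i = j then 0
  else if m + k ≤ (i : ℕ) ∧ (j : ℕ) < m then 0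
  else 1

/-- The digraph `D_{uv}` obtained from `D` by deleting the arc `(u,v)`, identifying `u`
with `v` (the merged vertex is `v`; the vertex `u` becomes isolated) and deleting
multiple arcs (and loops). -/
def contract (W : Fin n → Fin n → ℕ) (u v : Fin n) : Fin n → Fin n → ℕ :=
  fun i j =>
    if i = u ∨ j = u ∨ i = j then 0
    else if i = v then min 1 (W v j + W u j)
    else if j = v then min 1 (W i v + W i u)
    else min 1 (W i j)

/-- The digraph `D^w` obtained from `D` by subdividing the arc `(u,v)` with a new
vertex `w` (realized as the last vertex of `Fin (n+1)`). -/
def subdivide (W : Fin n → Fin n → ℕ) (u v : Fin n) : Fin (n + 1) → Fin (n + 1) → ℕ :=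
  fun i j =>
    if hi : (i : ℕ) < n then
      if hj : (j : ℕ) < n then
        if (⟨(i : ℕ), hi⟩ : Fin n) = u ∧ (⟨(j : ℕ), hj⟩ : Fin n) = v then 0
        else W ⟨(i : ℕ), hi⟩ ⟨(j : ℕ), hj⟩
      else if (⟨(i : ℕ), hi⟩ : Fin n) = u then 1 else 0
    else
      if hj : (j : ℕ) < n then (if (⟨(j : ℕ), hj⟩ : Fin n) = v then 1 else 0)
      else 0

/-!
Both bounds are Collatz–Wielandt estimates for the nonnegative matrix `Q = Q(B_{n,d})`. A positive
vector `w` with `Q w ≤ R w` confines every eigenvalue to the disc of radius `R`; a positive vector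
`v` with `c v ≤ Q v` gives `‖Q ^ k‖ ≥ c ^ k`, so the spectral radius is at least `c` by Gelfand's
formula.

Both test vectors belong to one family `weightB n d ρ`: weight `(ρ - 1) ^ b` on the path vertex `b`,
`(ρ - 1) ^ n` on the clique vertices other than `0`, and `(ρ - 2d + 3) (ρ - 1) ^ n` on `0`. It
satisfies `(Q w)_i = ρ w_i` at every vertex except `0`, where the defect is
`(d - 1 - (ρ - d)(ρ - 2d + 3)) (ρ - 1) ^ n + (ρ - 1) ^ d`. The defect is `≤ 0` at the larger root
`ρ = (3d - 3 + √((d - 1)² + 8)) / 2` of `(ρ - d)(ρ - 2d + 3) = d`, and `≥ 0` at `ρ = 2d - 2 + 1/d`.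
-/

open Filter Finset
open scoped NNReal ENNReal

section NonnegMatrix

variable {ι : Type*} [Fintype ι]

theorem mulVec_mono_of_nonneg {κ : Type*} {M : Matrix κ ι ℝ} (hM : ∀ i j, 0 ≤ M i j) {x y : ι → ℝ}
    (hxy : x ≤ y) : M *ᵥ x ≤ M *ᵥ y := fun i =>
  sum_le_sum fun j _ => mul_le_mul_of_nonneg_left (hxy j) (hM i j)

theorem norm_le_norm_of_nonneg_of_le {x y : ι → ℝ} (hx : 0 ≤ x) (hxy : x ≤ y) : ‖x‖ ≤ ‖y‖ :=
  (pi_norm_le_iff_of_nonneg (norm_nonneg y)).mpr fun i => by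
    rw [Real.norm_of_nonneg (hx i)]
    exact (hxy i).trans ((le_abs_self _).trans (norm_le_pi_norm y i))

attribute [local instance] Matrix.linftyOpNormedAddCommGroup Matrix.linftyOpNormedRing
  Matrix.linftyOpNormedAlgebra

theorem linfty_opNNNorm_map_ofReal {κ : Type*} [Fintype κ] (N : Matrix κ ι ℝ) :
    ‖N.map ((↑) : ℝ → ℂ)‖₊ = ‖N‖₊ := by
  simp [linfty_opNNNorm_def]

variable [DecidableEq ι]

theorem norm_le_of_mulVec_le_smul {M : Matrix ι ι ℝ} (hM : ∀ i j, 0 ≤ M i j) {w : ι → ℝ}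
    (hw : ∀ i, 0 < w i) {R : ℝ} (h : M *ᵥ w ≤ R • w) {μ : ℂ}
    (hμ : μ ∈ spectrum ℂ (M.map ((↑) : ℝ → ℂ))) : ‖μ‖ ≤ R := by
  rw [← Matrix.spectrum_toLin', ← Module.End.hasEigenvalue_iff_mem_spectrum] at hμ
  obtain ⟨v, hv⟩ := hμ.exists_hasEigenvector
  have hMv : M.map ((↑) : ℝ → ℂ) *ᵥ v = μ • v := by simpa using hv.apply_eq_smul
  obtain ⟨j₀, hj₀⟩ := Function.ne_iff.mp hv.2
  obtain ⟨i, -, hi⟩ := exists_max_image univ (fun j => ‖v j‖ / w j) ⟨j₀, mem_univ _⟩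
  set t := ‖v i‖ / w i
  have ht : 0 < t := (div_pos (norm_pos_iff.mpr hj₀) (hw j₀)).trans_le (hi j₀ (mem_univ _))
  have hvt : ∀ j, ‖v j‖ ≤ t * w j := fun j => (div_le_iff₀ (hw j)).mp (hi j (mem_univ _))
  have hbound : ‖μ‖ * (t * w i) ≤ R * (t * w i) := calc
    ‖μ‖ * (t * w i) = ‖∑ j, (M i j : ℂ) * v j‖ := by
      rw [div_mul_cancel₀ _ (hw i).ne', ← norm_mul, ← smul_eq_mul, ← Pi.smul_apply, ← hMv]
      rfl
    _ ≤ ∑ j, M i j * ‖v j‖ := (norm_sum_le _ _).trans_eq <| sum_congr rfl fun j _ => by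
      rw [norm_mul, Complex.norm_real, Real.norm_of_nonneg (hM i j)]
    _ ≤ ∑ j, M i j * (t * w j) :=
      sum_le_sum fun j _ => mul_le_mul_of_nonneg_left (hvt j) (hM i j)
    _ = t * (M *ᵥ w) i := by
      simp only [mulVec, dotProduct, mul_sum]
      exact sum_congr rfl fun j _ => by ring
    _ ≤ t * (R * w i) := mul_le_mul_of_nonneg_left (h i) ht.le
    _ = R * (t * w i) := by ring
  exact le_of_mul_le_mul_right hbound (mul_pos ht (hw i))

theorem pow_smul_le_pow_mulVec {M : Matrix ι ι ℝ} (hM : ∀ i j, 0 ≤ M i j) {v : ι → ℝ} {c : ℝ}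
    (hc : 0 ≤ c) (h : c • v ≤ M *ᵥ v) (k : ℕ) : c ^ k • v ≤ (M ^ k) *ᵥ v := by
  induction k with
  | zero => simp
  | succ k ih => calc
      c ^ (k + 1) • v = c ^ k • (c • v) := by rw [pow_succ, mul_smul]
      _ ≤ c ^ k • (M *ᵥ v) := smul_le_smul_of_nonneg_left h (pow_nonneg hc k)
      _ = M *ᵥ (c ^ k • v) := (mulVec_smul _ _ _).symm
      _ ≤ M *ᵥ ((M ^ k) *ᵥ v) := mulVec_mono_of_nonneg hM ih
      _ = (M ^ (k + 1)) *ᵥ v := by rw [mulVec_mulVec, pow_succ']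

theorem pow_le_linfty_opNorm_pow {M : Matrix ι ι ℝ} (hM : ∀ i j, 0 ≤ M i j) {v : ι → ℝ}
    (hv : 0 ≤ v) (hv0 : v ≠ 0) {c : ℝ} (hc : 0 ≤ c) (h : c • v ≤ M *ᵥ v) (k : ℕ) :
    c ^ k ≤ ‖M ^ k‖ := by
  refine le_of_mul_le_mul_right ?_ (norm_pos_iff.mpr hv0)
  calc c ^ k * ‖v‖ = ‖c ^ k • v‖ := by rw [norm_smul, Real.norm_of_nonneg (pow_nonneg hc k)]
    _ ≤ ‖(M ^ k) *ᵥ v‖ := norm_le_norm_of_nonneg_of_le (smul_nonneg (pow_nonneg hc k) hv)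
        (pow_smul_le_pow_mulVec hM hc h k)
    _ ≤ ‖M ^ k‖ * ‖v‖ := linfty_opNorm_mulVec _ _

theorem exists_mem_spectrum_le_norm {M : Matrix ι ι ℝ} (hM : ∀ i j, 0 ≤ M i j) {v : ι → ℝ}
    (hv : 0 ≤ v) (hv0 : v ≠ 0) {c : ℝ} (hc : 0 ≤ c) (h : c • v ≤ M *ᵥ v) :
    ∃ μ ∈ spectrum ℂ (M.map ((↑) : ℝ → ℂ)), c ≤ ‖μ‖ := by
  have : Nonempty ι := let ⟨i, _⟩ := Function.ne_iff.mp hv0; ⟨i⟩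
  set A := M.map ((↑) : ℝ → ℂ)
  have hpow : ∀ k : ℕ, c.toNNReal ^ k ≤ ‖A ^ k‖₊ := fun k => by
    rw [show A ^ k = (M ^ k).map ((↑) : ℝ → ℂ) from
        (map_pow Complex.ofRealHom.mapMatrix M k).symm,
      linfty_opNNNorm_map_ofReal, ← Real.toNNReal_pow hc, Real.toNNReal_le_iff_le_coe,
      coe_nnnorm]
    exact pow_le_linfty_opNorm_pow hM hv hv0 hc h k
  have hrad : (c.toNNReal : ℝ≥0∞) ≤ spectralRadius ℂ A := by
    refine ge_of_tendsto (spectrum.pow_nnnorm_pow_one_div_tendsto_nhds_spectralRadius A) ?_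
    filter_upwards [eventually_ne_atTop 0] with k hk
    calc (c.toNNReal : ℝ≥0∞) = ((c.toNNReal : ℝ≥0∞) ^ k) ^ (1 / k : ℝ) := by
          rw [← ENNReal.rpow_natCast, ← ENNReal.rpow_mul,
            mul_one_div_cancel (by exact_mod_cast hk), ENNReal.rpow_one]
      _ ≤ (‖A ^ k‖₊ : ℝ≥0∞) ^ (1 / k : ℝ) := by
          gcongr
          exact_mod_cast hpow k
  obtain ⟨μ, hμ, hμr⟩ := spectrum.exists_nnnorm_eq_spectralRadius A
  refine ⟨μ, hμ, ?_⟩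
  rwa [← hμr, ENNReal.coe_le_coe, ← NNReal.coe_le_coe, Real.coe_toNNReal _ hc,
    coe_nnnorm] at hrad

end NonnegMatrix

theorem radius_le_of_mulVec_le_smul {M : Matrix (Fin n) (Fin n) ℝ} (hM : ∀ i j, 0 ≤ M i j)
    {w : Fin n → ℝ} (hw : ∀ i, 0 < w i) {R : ℝ} (hR : 0 ≤ R) (h : M *ᵥ w ≤ R • w) :
    radius M ≤ R :=
  Real.sSup_le (by rintro _ ⟨μ, hμ, rfl⟩; exact norm_le_of_mulVec_le_smul hM hw h hμ) hR

theorem le_radius_of_smul_le_mulVec {M : Matrix (Fin n) (Fin n) ℝ} (hM : ∀ i j, 0 ≤ M i j)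
    {v : Fin n → ℝ} (hv : 0 ≤ v) (hv0 : v ≠ 0) {c : ℝ} (hc : 0 ≤ c) (h : c • v ≤ M *ᵥ v) :
    c ≤ radius M := by
  obtain ⟨μ, hμ, hcμ⟩ := exists_mem_spectrum_le_norm hM hv hv0 hc h
  have hbdd : BddAbove {r : ℝ | ∃ μ ∈ spectrum ℂ (M.map ((↑) : ℝ → ℂ)), r = ‖μ‖} :=
    ((Matrix.finite_spectrum _).image norm).bddAbove.mono <| by
      rintro _ ⟨μ, hμ, rfl⟩
      exact ⟨μ, hμ, rfl⟩
  exact hcμ.trans (le_csSup hbdd ⟨μ, hμ, rfl⟩)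

theorem Qmat_nonneg (W : Fin n → Fin n → ℕ) (i j : Fin n) : 0 ≤ Qmat W i j := by
  rw [Qmat, Matrix.add_apply, diagonal_apply]
  exact add_nonneg (by split_ifs <;> positivity) (Nat.cast_nonneg _)

theorem Qmat_mulVec_apply_of_nbrs {W : Fin n → Fin n → ℕ} {N : Fin n → Finset ℕ}
    (hN : ∀ i, N i ⊆ range n) (hW : ∀ i j, W i j = if (j : ℕ) ∈ N i then 1 else 0)
    (f : ℕ → ℝ) (i : Fin n) :
    (Qmat W *ᵥ fun j => f j) i = (N i).card * f i + ∑ b ∈ N i, f b := by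
  have hsum : ∀ g : ℕ → ℝ, ∑ j : Fin n, (W i j : ℝ) * g j = ∑ b ∈ N i, g b := fun g => by
    simp_rw [hW, Nat.cast_ite, Nat.cast_one, Nat.cast_zero, ite_mul, one_mul, zero_mul]
    rw [Fin.sum_univ_eq_sum_range (fun b => if b ∈ N i then g b else 0), sum_ite_mem,
      inter_eq_right.mpr (hN i)]
  have hdeg : (outdeg W i : ℝ) = (N i).card := by
    simpa [outdeg] using hsum 1
  rw [Qmat, add_mulVec, Pi.add_apply, mulVec_diagonal, hdeg]
  exact congrArg _ (hsum f)

def outNbrsB (n d i : ℕ) : Finset ℕ :=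
  if i = 0 then insert d ((range d).erase 0)
  else if i < d then (range d).erase i
  else if i < n - 1 then {i + 1}
  else {1}

theorem outNbrsB_subset_range {d : ℕ} (hdn : d < n) {i : ℕ} (hi : i < n) :
    outNbrsB n d i ⊆ range n := by
  intro b hb
  simp only [outNbrsB] at hb
  split_ifs at hb <;> simp at hb <;> simp <;> omega

theorem B_apply {d : ℕ} (hd : 0 < d) (hdn : d < n) (i j : Fin n) :
    B n d i j = if (j : ℕ) ∈ outNbrsB n d i then 1 else 0 := by
  have hi := i.isLt
  have hj := j.isLt
  simp only [B, outNbrsB, ne_eq, Fin.ext_iff]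
  split_ifs <;> simp only [mem_insert, mem_erase, mem_range, mem_singleton] at * <;> omega

def weightB (n d : ℕ) (ρ : ℝ) : ℕ → ℝ := fun b =>
  if b = 0 then (ρ - 2 * d + 3) * (ρ - 1) ^ n else if b < d then (ρ - 1) ^ n else (ρ - 1) ^ b

theorem sum_erase_zero_weightB {d : ℕ} (hd : 0 < d) (ρ : ℝ) :
    ∑ b ∈ (range d).erase 0, weightB n d ρ b = (d - 1) * (ρ - 1) ^ n := by
  have hconst : ∀ b ∈ (range d).erase 0, weightB n d ρ b = (ρ - 1) ^ n := fun b hb => by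
    rw [mem_erase, mem_range] at hb
    simp only [weightB, if_neg hb.1, if_pos hb.2]
  rw [sum_congr rfl hconst, sum_const, card_erase_of_mem (mem_range.mpr hd), card_range,
    nsmul_eq_mul, Nat.cast_pred hd]

theorem Qmat_B_mulVec_weightB {d : ℕ} (hd : 2 ≤ d) (hdn : d < n) (ρ : ℝ) (i : Fin n) :
    (Qmat (B n d) *ᵥ fun j => weightB n d ρ j) i = ρ * weightB n d ρ i +
      if (i : ℕ) = 0 then (d - 1 - (ρ - d) * (ρ - 2 * d + 3)) * (ρ - 1) ^ n + (ρ - 1) ^ d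
      else 0 := by
  rw [Qmat_mulVec_apply_of_nbrs (fun i => outNbrsB_subset_range hdn i.isLt)
    (B_apply (by omega) hdn)]
  have hi := i.isLt
  have hsum : ∑ b ∈ range d, weightB n d ρ b =
      (ρ - 2 * d + 3) * (ρ - 1) ^ n + (d - 1) * (ρ - 1) ^ n := by
    rw [← add_sum_erase _ _ (mem_range.mpr (by omega : 0 < d)), sum_erase_zero_weightB (by omega)]
    simp [weightB]
  by_cases h0 : (i : ℕ) = 0
  · rw [outNbrsB, if_pos h0, card_insert_of_notMem (by simp), card_erase_of_mem (by simp; omega),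
      card_range, sum_insert (by simp), sum_erase_zero_weightB (by omega), if_pos h0, h0]
    simp only [weightB, if_neg (by omega : d ≠ 0), lt_irrefl, if_false]
    push_cast [Nat.cast_pred (by omega : 0 < d)]
    ring
  by_cases hid : (i : ℕ) < d
  · rw [outNbrsB, if_neg h0, if_pos hid, card_erase_of_mem (mem_range.mpr hid), card_range,
      sum_erase_eq_sub (mem_range.mpr hid), hsum, if_neg h0]
    simp only [weightB, if_neg h0, if_pos hid]
    push_cast [Nat.cast_pred (by omega : 0 < d)]
    ring
  by_cases hlast : (i : ℕ) < n - 1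
  · rw [outNbrsB, if_neg h0, if_neg hid, if_pos hlast, card_singleton, sum_singleton, if_neg h0]
    simp only [weightB, if_neg h0, if_neg hid, if_neg (by omega : (i : ℕ) + 1 ≠ 0),
      if_neg (by omega : ¬ (i : ℕ) + 1 < d)]
    ring
  · rw [outNbrsB, if_neg h0, if_neg hid, if_neg hlast, card_singleton, sum_singleton, if_neg h0]
    simp only [weightB, if_neg h0, if_neg hid, if_neg (by omega : 1 ≠ 0),
      if_pos (by omega : 1 < d)]
    rw [show (ρ - 1) ^ n = (ρ - 1) ^ ((i : ℕ) + 1) from congrArg _ (by omega)]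
    push_cast
    ring

theorem weightB_pos {d : ℕ} (hd : 2 ≤ d) {ρ : ℝ} (hρ : 2 * d - 2 ≤ ρ) (b : ℕ) :
    0 < weightB n d ρ b := by
  have hd' : (2 : ℝ) ≤ d := by exact_mod_cast hd
  have hr : 0 < ρ - 1 := by linarith
  unfold weightB
  split_ifs
  · exact mul_pos (by linarith) (pow_pos hr n)
  · exact pow_pos hr n
  · exact pow_pos hr b

theorem q_B_le {d : ℕ} (hd : 2 ≤ d) (hdn : d < n) {R : ℝ} (hR : 2 * d - 2 ≤ R)
    (hRq : d ≤ (R - d) * (R - 2 * d + 3)) : q (B n d) ≤ R := by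
  have hd' : (2 : ℝ) ≤ d := by exact_mod_cast hd
  refine radius_le_of_mulVec_le_smul (Qmat_nonneg _) (fun i => weightB_pos (n := n) hd hR i)
    (by linarith) fun i => ?_
  rw [Qmat_B_mulVec_weightB hd hdn, Pi.smul_apply, smul_eq_mul]
  split_ifs
  · have hpow : (R - 1) ^ d ≤ (R - 1) ^ n := pow_le_pow_right₀ (by linarith) hdn.le
    nlinarith [pow_pos (show 0 < R - 1 by linarith) n]
  · simp

theorem le_q_B {d : ℕ} (hd : 2 ≤ d) (hdn : d < n) {c : ℝ} (hc : 2 * d - 2 ≤ c)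
    (hcq : (c - d) * (c - 2 * d + 3) ≤ d - 1) : c ≤ q (B n d) := by
  have hd' : (2 : ℝ) ≤ d := by exact_mod_cast hd
  have hw := weightB_pos (n := n) hd hc
  refine le_radius_of_smul_le_mulVec (Qmat_nonneg _) (fun i => (hw i).le)
    (Function.ne_iff.mpr ⟨⟨0, by omega⟩, (hw 0).ne'⟩) (by linarith) fun i => ?_
  rw [Qmat_B_mulVec_weightB hd hdn, Pi.smul_apply, smul_eq_mul]
  split_ifs
  · have hr : 0 ≤ c - 1 := by linarith
    nlinarith [pow_nonneg hr n, pow_nonneg hr d]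
  · simp

/-- For `2 ≤ d ≤ n-1`,
`2d-2 < q(B_{n,d}) ≤ (3d-3+√((d-1)²+8))/2`. -/
theorem q_B_bounds {n d : ℕ} (hd : 2 ≤ d) (hdn : d ≤ n - 1) :
    2 * (d : ℝ) - 2 < q (B n d) ∧
    q (B n d) ≤ (3 * (d : ℝ) - 3 + Real.sqrt (((d : ℝ) - 1) ^ 2 + 8)) / 2 := by
  have hd' : (2 : ℝ) ≤ d := by exact_mod_cast hd
  have hdn' : d < n := by omega
  constructor
  · calc 2 * (d : ℝ) - 2 < 2 * d - 2 + 1 / d := by simp only [lt_add_iff_pos_right]; positivity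
      _ ≤ q (B n d) := le_q_B hd hdn' (by simp only [le_add_iff_nonneg_right]; positivity) (by
          field_simp
          nlinarith)
  · set s := Real.sqrt (((d : ℝ) - 1) ^ 2 + 8)
    have hs : s ^ 2 = ((d : ℝ) - 1) ^ 2 + 8 := Real.sq_sqrt (by positivity)
    have hs' : (d : ℝ) - 1 ≤ s := Real.le_sqrt_of_sq_le (by linarith)
    exact q_B_le hd hdn' (by linarith) (by nlinarith)

end SignlessDigraph
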